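/- arXiv:1702.06398 — 9 statements merged into one kernel-verified Lean document; each statement's English description precedes it below -/
import Mathlib

section
/- Suppose the controllers of the four response systems are chosen according to the control law (17), i.e., for every t and every m = 1,…,n one has c₁,ₗ₍ₘ₎ u₁,ₗ₍ₘ₎(t) + d₁,ₘ u₃,ₘ(t) = a₁,ᵢ₍ₘ₎ f₁,ᵢ₍ₘ₎(x₁(t)) + b₁,ⱼ₍ₘ₎ g₁,ⱼ₍ₘ₎(y₁(t)) − c₁,ₗ₍ₘ₎ h₁,ₗ₍ₘ₎(z₁(t)) − d₁,ₘ k₁,ₘ(w₁(t)) + e₁ₘ(t) and c₂,ₗ₍ₘ₎ u₂,ₗ₍ₘ₎(t) + d₂,ₘ u₄,ₘ(t) = a₂,ᵢ₍ₘ₎ f₂,ᵢ₍ₘ₎(x₂(t)) + b₂,ⱼ₍ₘ₎ g₂,ⱼ₍ₘ₎(y₂(t)) − c₂,ₗ₍ₘ₎ h₂,ₗ₍ₘ₎(z₂(t)) − d₂,ₘ k₂,ₘ(w₂(t)) + e₂ₘ(t). Then every multi-switched error component tends to zero: for all m, e₁ₘ(t) → 0 and e₂ₘ(t) → 0 as t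 → ∞; that is, the four drive systems achieve dual combination–combination multi-switching synchronization with the four response systems. -/
open Filter Topology

lemma decay_to_zero (e : ℝ → ℝ) (h : ∀ t, HasDerivAt e (-(e t)) t) :
    Tendsto e atTop (𝓝 0) := by
  set F : ℝ → ℝ := fun t => e t * Real.exp t with hF
  have hF' : ∀ t, HasDerivAt F 0 t := by
    intro t
    have := (h t).mul (Real.hasDerivAt_exp t)
    have h0 : -(e t) * Real.exp t + e t * Real.exp t = 0 := by ring
    rw [h0] at this
    exact this
  have hconst : ∀ t, F t = F 0 := by
    intro t
    have hd : Differentiable ℝ F := fun t => (hF' t).differentiableAt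
    have := is_const_of_deriv_eq_zero hd (fun t => (hF' t).deriv) t 0
    exact this
  have heq : ∀ t, e t = F 0 * Real.exp (-t) := by
    intro t
    have := hconst t
    have hexp : Real.exp t ≠ 0 := Real.exp_ne_zero t
    have h2 : e t = e t * Real.exp t * Real.exp (-t) := by
      rw [mul_assoc, ← Real.exp_add, add_neg_cancel, Real.exp_zero, mul_one]
    rw [h2]
    exact congrArg (· * Real.exp (-t)) this
  have hlim : Tendsto (fun t => F 0 * Real.exp (-t)) atTop (𝓝 (F 0 * 0)) :=
    (Real.tendsto_exp_neg_atTop_nhds_zero).const_mul _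
  rw [mul_zero] at hlim
  exact hlim.congr (fun t => (heq t).symm)

/-- Dual combination–combination multi-switching synchronization (Theorem 1):
under the control law (17), every multi-switched error component tends to zero. -/
theorem dual_combination_combination_multi_switching_synchronization
    (n : ℕ) (hn : 1 ≤ n)
    (f₁ f₂ g₁ g₂ h₁ h₂ k₁ k₂ : (Fin n → ℝ) → (Fin n → ℝ))
    (x₁ x₂ y₁ y₂ z₁ z₂ w₁ w₂ u₁ u₂ u₃ u₄ : ℝ → Fin n → ℝ)
    (a₁ a₂ b₁ b₂ c₁ c₂ d₁ d₂ : Fin n → ℝ)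
    (i j l : Fin n → Fin n)
    (hx₁ : ∀ t m, HasDerivAt (fun s => x₁ s m) (f₁ (x₁ t) m) t)
    (hx₂ : ∀ t m, HasDerivAt (fun s => x₂ s m) (f₂ (x₂ t) m) t)
    (hy₁ : ∀ t m, HasDerivAt (fun s => y₁ s m) (g₁ (y₁ t) m) t)
    (hy₂ : ∀ t m, HasDerivAt (fun s => y₂ s m) (g₂ (y₂ t) m) t)
    (hz₁ : ∀ t m, HasDerivAt (fun s => z₁ s m) (h₁ (z₁ t) m + u₁ t m) t)
    (hz₂ : ∀ t m, HasDerivAt (fun s => z₂ s m) (h₂ (z₂ t) m + u₂ t m) t)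
    (hw₁ : ∀ t m, HasDerivAt (fun s => w₁ s m) (k₁ (w₁ t) m + u₃ t m) t)
    (hw₂ : ∀ t m, HasDerivAt (fun s => w₂ s m) (k₂ (w₂ t) m + u₄ t m) t)
    (e₁ e₂ : ℝ → Fin n → ℝ)
    (he₁ : ∀ t m, e₁ t m =
      a₁ (i m) * x₁ t (i m) + b₁ (j m) * y₁ t (j m)
        - c₁ (l m) * z₁ t (l m) - d₁ m * w₁ t m)
    (he₂ : ∀ t m, e₂ t m =
      a₂ (i m) * x₂ t (i m) + b₂ (j m) * y₂ t (j m)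
        - c₂ (l m) * z₂ t (l m) - d₂ m * w₂ t m)
    (hu₁ : ∀ t m, c₁ (l m) * u₁ t (l m) + d₁ m * u₃ t m =
      a₁ (i m) * f₁ (x₁ t) (i m) + b₁ (j m) * g₁ (y₁ t) (j m)
        - c₁ (l m) * h₁ (z₁ t) (l m) - d₁ m * k₁ (w₁ t) m + e₁ t m)
    (hu₂ : ∀ t m, c₂ (l m) * u₂ t (l m) + d₂ m * u₄ t m =
      a₂ (i m) * f₂ (x₂ t) (i m) + b₂ (j m) * g₂ (y₂ t) (j m)
        - c₂ (l m) * h₂ (z₂ t) (l m) - d₂ m * k₂ (w₂ t) m + e₂ t m) :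
    ∀ m : Fin n,
      Tendsto (fun t => e₁ t m) atTop (𝓝 0) ∧
      Tendsto (fun t => e₂ t m) atTop (𝓝 0) := by
  intro m
  have key : ∀ (e : ℝ → Fin n → ℝ) (A B C D : ℝ)
      (X Y Z W : ℝ → ℝ) (FX FY FZ FW : ℝ → ℝ),
      (∀ t, HasDerivAt X (FX t) t) → (∀ t, HasDerivAt Y (FY t) t) →
      (∀ t, HasDerivAt Z (FZ t) t) → (∀ t, HasDerivAt W (FW t) t) →
      (∀ t, e t m = A * X t + B * Y t - C * Z t - D * W t) →
      (∀ t, C * FZ t + D * FW t = A * FX t + B * FY t + e t m) →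
      Tendsto (fun t => e t m) atTop (𝓝 0) := by
    intro e A B C D X Y Z W FX FY FZ FW hX hY hZ hW he hu
    apply decay_to_zero
    intro t
    have hd : HasDerivAt (fun s => A * X s + B * Y s - C * Z s - D * W s)
        (A * FX t + B * FY t - C * FZ t - D * FW t) t :=
      ((((hX t).const_mul A).add ((hY t).const_mul B)).sub
        ((hZ t).const_mul C)).sub ((hW t).const_mul D)
    have : A * FX t + B * FY t - C * FZ t - D * FW t = -(e t m) := by
      have := hu t; linarith
    rw [this] at hd
    exact hd.congr_of_eventuallyEq (Filter.Eventually.of_forall fun s => he s)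
  constructor
  · exact key e₁ (a₁ (i m)) (b₁ (j m)) (c₁ (l m)) (d₁ m)
      (fun t => x₁ t (i m)) (fun t => y₁ t (j m)) (fun t => z₁ t (l m)) (fun t => w₁ t m)
      (fun t => f₁ (x₁ t) (i m)) (fun t => g₁ (y₁ t) (j m))
      (fun t => h₁ (z₁ t) (l m) + u₁ t (l m)) (fun t => k₁ (w₁ t) m + u₃ t m)
      (fun t => hx₁ t (i m)) (fun t => hy₁ t (j m)) (fun t => hz₁ t (l m)) (fun t => hw₁ t m)
      (fun t => he₁ t m) (fun t => by have := hu₁ t m; ring_nf; ring_nf at this; linarith)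
  · exact key e₂ (a₂ (i m)) (b₂ (j m)) (c₂ (l m)) (d₂ m)
      (fun t => x₂ t (i m)) (fun t => y₂ t (j m)) (fun t => z₂ t (l m)) (fun t => w₂ t m)
      (fun t => f₂ (x₂ t) (i m)) (fun t => g₂ (y₂ t) (j m))
      (fun t => h₂ (z₂ t) (l m) + u₂ t (l m)) (fun t => k₂ (w₂ t) m + u₄ t m)
      (fun t => hx₂ t (i m)) (fun t => hy₂ t (j m)) (fun t => hz₂ t (l m)) (fun t => hw₂ t m)
      (fun t => he₂ t m) (fun t => by have := hu₂ t m; ring_nf; ring_nf at this; linarith)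
end

section
/- (Corollary 1(i)) Suppose a₁ = b₁ = c₁ = d₁ = 0, and suppose the second-family controllers satisfy, for every t and every m = 1,…,n, c₂,ₗ₍ₘ₎ u₂,ₗ₍ₘ₎(t) + d₂,ₘ u₄,ₘ(t) = a₂,ᵢ₍ₘ₎ f₂,ᵢ₍ₘ₎(x₂(t)) + b₂,ⱼ₍ₘ₎ g₂,ⱼ₍ₘ₎(y₂(t)) − c₂,ₗ₍ₘ₎ h₂,ₗ₍ₘ₎(z₂(t)) − d₂,ₘ k₂,ₘ(w₂(t)) + e₂ₘ(t). Then for every m, e₂ₘ(t) → 0 as t → ∞; that is, the drive systems x₂' = f₂(x₂) and y₂' = g₂(y₂) achieve multi-switching combination–combination synchronization with the response systems z₂' = h₂(z₂) + u₂ and w₂' = k₂(w₂) + u₄. -/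
open Filter Topology

/-- Corollary 1(i): if a₁ = b₁ = c₁ = d₁ = 0 and the second-family control law holds,
then the drive systems x₂' = f₂(x₂), y₂' = g₂(y₂) achieve multi-switching
combination–combination synchronization with z₂' = h₂(z₂) + u₂, w₂' = k₂(w₂) + u₄. -/
theorem multi_switching_combination_combination_sync_second_family
    (n : ℕ) (hn : 1 ≤ n)
    (f₂ g₂ h₂ k₂ : (Fin n → ℝ) → (Fin n → ℝ))
    (x₂ y₂ z₂ w₂ u₂ u₄ : ℝ → Fin n → ℝ)
    (a₁ b₁ c₁ d₁ a₂ b₂ c₂ d₂ : Fin n → ℝ)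
    (i j l : Fin n → Fin n)
    (ha₁ : a₁ = 0) (hb₁ : b₁ = 0) (hc₁ : c₁ = 0) (hd₁ : d₁ = 0)
    (hx₂ : ∀ t m, HasDerivAt (fun s => x₂ s m) (f₂ (x₂ t) m) t)
    (hy₂ : ∀ t m, HasDerivAt (fun s => y₂ s m) (g₂ (y₂ t) m) t)
    (hz₂ : ∀ t m, HasDerivAt (fun s => z₂ s m) (h₂ (z₂ t) m + u₂ t m) t)
    (hw₂ : ∀ t m, HasDerivAt (fun s => w₂ s m) (k₂ (w₂ t) m + u₄ t m) t)
    (e₂ : ℝ → Fin n → ℝ)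
    (he₂ : ∀ t m, e₂ t m =
      a₂ (i m) * x₂ t (i m) + b₂ (j m) * y₂ t (j m)
        - c₂ (l m) * z₂ t (l m) - d₂ m * w₂ t m)
    (hu₂ : ∀ t m, c₂ (l m) * u₂ t (l m) + d₂ m * u₄ t m =
      a₂ (i m) * f₂ (x₂ t) (i m) + b₂ (j m) * g₂ (y₂ t) (j m)
        - c₂ (l m) * h₂ (z₂ t) (l m) - d₂ m * k₂ (w₂ t) m + e₂ t m) :
    ∀ m : Fin n, Tendsto (fun t => e₂ t m) atTop (𝓝 0) := by
  intro m
  -- derivative of the error: e₂' = -e₂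
  have hE : ∀ t, HasDerivAt (fun s => e₂ s m) (-(e₂ t m)) t := by
    intro t
    have h : HasDerivAt (fun s => a₂ (i m) * x₂ s (i m) + b₂ (j m) * y₂ s (j m)
        - c₂ (l m) * z₂ s (l m) - d₂ m * w₂ s m)
        (a₂ (i m) * f₂ (x₂ t) (i m) + b₂ (j m) * g₂ (y₂ t) (j m)
          - c₂ (l m) * (h₂ (z₂ t) (l m) + u₂ t (l m))
          - d₂ m * (k₂ (w₂ t) m + u₄ t m)) t :=
      ((((hx₂ t (i m)).const_mul _).add ((hy₂ t (j m)).const_mul _)).sub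
        ((hz₂ t (l m)).const_mul _)).sub ((hw₂ t m).const_mul _)
    have heq : (fun s => e₂ s m) = fun s => a₂ (i m) * x₂ s (i m)
        + b₂ (j m) * y₂ s (j m) - c₂ (l m) * z₂ s (l m) - d₂ m * w₂ s m := by
      funext s; exact he₂ s m
    rw [heq]
    convert h using 1
    have hu := hu₂ t m
    nlinarith [hu]
  -- hence e₂ t m * exp t is constant
  have hF : ∀ t, HasDerivAt (fun s => e₂ s m * Real.exp s) 0 t := by
    intro t
    have : HasDerivAt (fun s => e₂ s m * Real.exp s) (-e₂ t m * Real.exp t + e₂ t m * Real.exp t) t :=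
      (hE t).mul (Real.hasDerivAt_exp t)
    convert this using 1
    ring
  have hconst : ∀ t, e₂ t m * Real.exp t = e₂ 0 m * Real.exp 0 := by
    intro t
    have : (fun s => e₂ s m * Real.exp s) t = (fun s => e₂ s m * Real.exp s) 0 :=
      is_const_of_deriv_eq_zero (fun s => (hF s).differentiableAt)
        (fun s => (hF s).deriv) t 0
    simpa using this
  have hform : ∀ t, e₂ t m = e₂ 0 m * Real.exp (-t) := by
    intro t
    have h := hconst t
    have hexp : Real.exp t ≠ 0 := (Real.exp_pos t).ne'
    field_simp [Real.exp_neg] at h ⊢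
    rw [Real.exp_zero, mul_one] at h
    rw [Real.exp_neg, ← h, mul_assoc, mul_inv_cancel₀ hexp, mul_one]
  have : Tendsto (fun t : ℝ => e₂ 0 m * Real.exp (-t)) atTop (𝓝 0) := by
    have := Real.tendsto_exp_neg_atTop_nhds_zero
    simpa using this.const_mul (e₂ 0 m)
  exact this.congr (fun t => (hform t).symm)
end

section
/- (Corollary 1(ii)) Suppose a₂ = b₂ = c₂ = d₂ = 0, and suppose the first-family controllers satisfy, for every t and every m = 1,…,n, c₁,ₗ₍ₘ₎ u₁,ₗ₍ₘ₎(t) + d₁,ₘ u₃,ₘ(t) = a₁,ᵢ₍ₘ₎ f₁,ᵢ₍ₘ₎(x₁(t)) + b₁,ⱼ₍ₘ₎ g₁,ⱼ₍ₘ₎(y₁(t)) − c₁,ₗ₍ₘ₎ h₁,ₗ₍ₘ₎(z₁(t)) − d₁,ₘ k₁,ₘ(w₁(t)) + e₁ₘ(t). Then for every m, e₁ₘ(t) → 0 as t → ∞; that is, the drive systems x₁' = f₁(x₁) and y₁' = g₁(y₁) achieve multi-switching combination–combination synchronization with the response systems z₁' = h₁(z₁) + u₁ and w₁' = k₁(w₁)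 + u₃. -/
open Filter Topology

/-- Corollary 1(ii): if a₂ = b₂ = c₂ = d₂ = 0 and the first-family control law holds,
then the drive systems x₁' = f₁(x₁), y₁' = g₁(y₁) achieve multi-switching
combination–combination synchronization with z₁' = h₁(z₁) + u₁, w₁' = k₁(w₁) + u₃. -/
theorem multi_switching_combination_combination_sync_first_family
    (n : ℕ) (hn : 1 ≤ n)
    (f₁ g₁ h₁ k₁ : (Fin n → ℝ) → (Fin n → ℝ))
    (x₁ y₁ z₁ w₁ u₁ u₃ : ℝ → Fin n → ℝ)
    (a₁ b₁ c₁ d₁ a₂ b₂ c₂ d₂ : Fin n → ℝ)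
    (i j l : Fin n → Fin n)
    (ha₂ : a₂ = 0) (hb₂ : b₂ = 0) (hc₂ : c₂ = 0) (hd₂ : d₂ = 0)
    (hx₁ : ∀ t m, HasDerivAt (fun s => x₁ s m) (f₁ (x₁ t) m) t)
    (hy₁ : ∀ t m, HasDerivAt (fun s => y₁ s m) (g₁ (y₁ t) m) t)
    (hz₁ : ∀ t m, HasDerivAt (fun s => z₁ s m) (h₁ (z₁ t) m + u₁ t m) t)
    (hw₁ : ∀ t m, HasDerivAt (fun s => w₁ s m) (k₁ (w₁ t) m + u₃ t m) t)
    (e₁ : ℝ → Fin n → ℝ)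
    (he₁ : ∀ t m, e₁ t m =
      a₁ (i m) * x₁ t (i m) + b₁ (j m) * y₁ t (j m)
        - c₁ (l m) * z₁ t (l m) - d₁ m * w₁ t m)
    (hu₁ : ∀ t m, c₁ (l m) * u₁ t (l m) + d₁ m * u₃ t m =
      a₁ (i m) * f₁ (x₁ t) (i m) + b₁ (j m) * g₁ (y₁ t) (j m)
        - c₁ (l m) * h₁ (z₁ t) (l m) - d₁ m * k₁ (w₁ t) m + e₁ t m) :
    ∀ m : Fin n, Tendsto (fun t => e₁ t m) atTop (𝓝 0) := by
  intro m
  -- derivative of the error is -e₁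
  have hde : ∀ t, HasDerivAt (fun s => e₁ s m) (-(e₁ t m)) t := by
    intro t
    have H := ((((hx₁ t (i m)).const_mul (a₁ (i m))).add
        ((hy₁ t (j m)).const_mul (b₁ (j m)))).sub
        ((hz₁ t (l m)).const_mul (c₁ (l m)))).sub
        ((hw₁ t m).const_mul (d₁ m))
    have heq : (fun s => a₁ (i m) * x₁ s (i m) + b₁ (j m) * y₁ s (j m)
        - c₁ (l m) * z₁ s (l m) - d₁ m * w₁ s m) = fun s => e₁ s m := by
      funext s; rw [he₁ s m]
    change HasDerivAt (fun s => a₁ (i m) * x₁ s (i m) + b₁ (j m) * y₁ s (j m)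
        - c₁ (l m) * z₁ s (l m) - d₁ m * w₁ s m) _ t at H
    rw [heq] at H
    have hval : a₁ (i m) * f₁ (x₁ t) (i m) + b₁ (j m) * g₁ (y₁ t) (j m)
        - c₁ (l m) * (h₁ (z₁ t) (l m) + u₁ t (l m))
        - d₁ m * (k₁ (w₁ t) m + u₃ t m) = -(e₁ t m) := by
      have := hu₁ t m; ring_nf; ring_nf at this; linarith
    rwa [hval] at H
  -- g t = e₁ t m * exp t is constant
  have hg : ∀ t, HasDerivAt (fun s => e₁ s m * Real.exp s) 0 t := by
    intro t
    have H := (hde t).mul (Real.hasDerivAt_exp t)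
    convert H using 1
    · rfl
    · rfl
    · rfl
    ring
  have hconst : ∀ t : ℝ, e₁ t m * Real.exp t = e₁ 0 m * Real.exp 0 := by
    intro t
    exact is_const_of_deriv_eq_zero (fun s => (hg s).differentiableAt)
      (fun s => (hg s).deriv) t 0
  have hrepr : ∀ t : ℝ, e₁ t m = e₁ 0 m * Real.exp (-t) := by
    intro t
    have h := hconst t
    have hpos := Real.exp_pos t
    rw [Real.exp_zero, mul_one] at h
    rw [Real.exp_neg]
    field_simp
    linarith [h]
  have T : Tendsto (fun t : ℝ => e₁ 0 m * Real.exp (-t)) atTop (𝓝 (e₁ 0 m * 0)) :=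
    (Real.tendsto_exp_neg_atTop_nhds_zero).const_mul _
  rw [mul_zero] at T
  exact T.congr (fun t => (hrepr t).symm)
end

section
/- (Corollary 3(i)) Suppose a₁ = b₁ = c₁ = d₁ = 0 and c₂ = 0, suppose d₂,ₘ ≠ 0 for all m, and suppose the controller u₄ is chosen as u₄,ₘ(t) = d₂,ₘ⁻¹ a₂,ᵢ₍ₘ₎ f₂,ᵢ₍ₘ₎(x₂(t)) + d₂,ₘ⁻¹ b₂,ⱼ₍ₘ₎ g₂,ⱼ₍ₘ₎(y₂(t)) − k₂,ₘ(w₂(t)) + d₂,ₘ⁻¹ e₂ₘ(t), where e₂ₘ(t) = a₂,ᵢ₍ₘ₎ x₂,ᵢ₍ₘ₎(t) + b₂,ⱼ₍ₘ₎ y₂,ⱼ₍ₘ₎(t) − d₂,ₘ w₂,ₘ(t). Then for every m, e₂ₘ(t) → 0 as t → ∞; that is, the drive systems x₂' = f₂(x₂) and y₂' = g₂(y₂) achieve multi-switching combination synchronization with the response system w₂' = k₂(w₂) + u₄. -/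
open Filter Topology

/-- Corollary 3(i): if a₁ = b₁ = c₁ = d₁ = 0, c₂ = 0, d₂ has nonzero entries, and u₄ is
chosen as prescribed, then the drive systems x₂' = f₂(x₂), y₂' = g₂(y₂) achieve
multi-switching combination synchronization with w₂' = k₂(w₂) + u₄. -/
theorem multi_switching_combination_sync_w₂
    (n : ℕ) (hn : 1 ≤ n)
    (f₂ g₂ k₂ : (Fin n → ℝ) → (Fin n → ℝ))
    (x₂ y₂ w₂ u₄ : ℝ → Fin n → ℝ)
    (a₁ b₁ c₁ d₁ a₂ b₂ c₂ d₂ : Fin n → ℝ)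
    (i j : Fin n → Fin n)
    (ha₁ : a₁ = 0) (hb₁ : b₁ = 0) (hc₁ : c₁ = 0) (hd₁ : d₁ = 0) (hc₂ : c₂ = 0)
    (hd₂ : ∀ m, d₂ m ≠ 0)
    (hx₂ : ∀ t m, HasDerivAt (fun s => x₂ s m) (f₂ (x₂ t) m) t)
    (hy₂ : ∀ t m, HasDerivAt (fun s => y₂ s m) (g₂ (y₂ t) m) t)
    (hw₂ : ∀ t m, HasDerivAt (fun s => w₂ s m) (k₂ (w₂ t) m + u₄ t m) t)
    (e₂ : ℝ → Fin n → ℝ)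
    (he₂ : ∀ t m, e₂ t m =
      a₂ (i m) * x₂ t (i m) + b₂ (j m) * y₂ t (j m) - d₂ m * w₂ t m)
    (hu₄ : ∀ t m, u₄ t m =
      (d₂ m)⁻¹ * a₂ (i m) * f₂ (x₂ t) (i m) + (d₂ m)⁻¹ * b₂ (j m) * g₂ (y₂ t) (j m)
        - k₂ (w₂ t) m + (d₂ m)⁻¹ * e₂ t m) :
    ∀ m : Fin n, Tendsto (fun t => e₂ t m) atTop (𝓝 0) := by
  intro m
  have key : ∀ t, HasDerivAt (fun s => e₂ s m) (-(e₂ t m)) t := by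
    intro t
    have hfun : (fun s => e₂ s m) =
        fun s => a₂ (i m) * x₂ s (i m) + b₂ (j m) * y₂ s (j m) - d₂ m * w₂ s m :=
      funext fun s => he₂ s m
    have hD : HasDerivAt
        (fun s => a₂ (i m) * x₂ s (i m) + b₂ (j m) * y₂ s (j m) - d₂ m * w₂ s m)
        (a₂ (i m) * f₂ (x₂ t) (i m) + b₂ (j m) * g₂ (y₂ t) (j m)
          - d₂ m * (k₂ (w₂ t) m + u₄ t m)) t :=
      (((hx₂ t (i m)).const_mul _).add ((hy₂ t (j m)).const_mul _)).sub
        ((hw₂ t m).const_mul _)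
    have hval : a₂ (i m) * f₂ (x₂ t) (i m) + b₂ (j m) * g₂ (y₂ t) (j m)
        - d₂ m * (k₂ (w₂ t) m + u₄ t m) = -(e₂ t m) := by
      rw [hu₄ t m]
      field_simp [hd₂ m]
      ring
    rw [hfun]
    exact hval ▸ hD
  have hconst : ∀ t, e₂ t m * Real.exp t = e₂ 0 m := by
    have hderiv : ∀ t, HasDerivAt (fun s => e₂ s m * Real.exp s) 0 t := by
      intro t
      have := (key t).mul (Real.hasDerivAt_exp t)
      rw [show -(e₂ t m) * Real.exp t + e₂ t m * Real.exp t = 0 by ring] at this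
      exact this
    intro t
    have := is_const_of_deriv_eq_zero (f := fun s => e₂ s m * Real.exp s)
      (fun s => (hderiv s).differentiableAt) (fun s => (hderiv s).deriv) t 0
    simpa using this
  have heq : ∀ t, e₂ t m = e₂ 0 m * Real.exp (-t) := by
    intro t
    have h := hconst t
    rw [Real.exp_neg]
    field_simp
    linarith [h]
  have : Tendsto (fun t => e₂ 0 m * Real.exp (-t)) atTop (𝓝 0) := by
    have := Real.tendsto_exp_neg_atTop_nhds_zero
    simpa using this.const_mul (e₂ 0 m)
  exact this.congr fun t => (heq t).symm
end

section
/- (Corollary 3(ii)) Suppose a₁ = b₁ = c₁ = d₁ = 0 and d₂ = 0, suppose c₂,ₗ ≠ 0 for all l and the switching map l : {1,…,n} → {1,…,n} is a bijection, and suppose the controller u₂ is chosen as u₂,ₗ₍ₘ₎(t) = c₂,ₗ₍ₘ₎⁻¹ a₂,ᵢ₍ₘ₎ f₂,ᵢ₍ₘ₎(x₂(t)) + c₂,ₗ₍ₘ₎⁻¹ b₂,ⱼ₍ₘ₎ g₂,ⱼ₍ₘ₎(y₂(t)) − h₂,ₗ₍ₘ₎(z₂(t)) + c₂,ₗ₍ₘ₎⁻¹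 e₂ₘ(t), where e₂ₘ(t) = a₂,ᵢ₍ₘ₎ x₂,ᵢ₍ₘ₎(t) + b₂,ⱼ₍ₘ₎ y₂,ⱼ₍ₘ₎(t) − c₂,ₗ₍ₘ₎ z₂,ₗ₍ₘ₎(t). Then for every m, e₂ₘ(t) → 0 as t → ∞; that is, the drive systems x₂' = f₂(x₂) and y₂' = g₂(y₂) achieve multi-switching combination synchronization with the response system z₂' = h₂(z₂) + u₂. -/
open Filter Topology

/-- Corollary 3(ii): if a₁ = b₁ = c₁ = d₁ = 0, d₂ = 0, c₂ has nonzero entries, the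
switching map l is a bijection, and u₂ is chosen as prescribed, then the drive systems
x₂' = f₂(x₂), y₂' = g₂(y₂) achieve multi-switching combination synchronization with
z₂' = h₂(z₂) + u₂. -/
theorem multi_switching_combination_sync_z₂
    (n : ℕ) (hn : 1 ≤ n)
    (f₂ g₂ h₂ : (Fin n → ℝ) → (Fin n → ℝ))
    (x₂ y₂ z₂ u₂ : ℝ → Fin n → ℝ)
    (a₁ b₁ c₁ d₁ a₂ b₂ c₂ d₂ : Fin n → ℝ)
    (i j l : Fin n → Fin n)
    (ha₁ : a₁ = 0) (hb₁ : b₁ = 0) (hc₁ : c₁ = 0) (hd₁ : d₁ = 0) (hd₂ : d₂ = 0)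
    (hc₂ : ∀ m, c₂ m ≠ 0)
    (hl : Function.Bijective l)
    (hx₂ : ∀ t m, HasDerivAt (fun s => x₂ s m) (f₂ (x₂ t) m) t)
    (hy₂ : ∀ t m, HasDerivAt (fun s => y₂ s m) (g₂ (y₂ t) m) t)
    (hz₂ : ∀ t m, HasDerivAt (fun s => z₂ s m) (h₂ (z₂ t) m + u₂ t m) t)
    (e₂ : ℝ → Fin n → ℝ)
    (he₂ : ∀ t m, e₂ t m =
      a₂ (i m) * x₂ t (i m) + b₂ (j m) * y₂ t (j m) - c₂ (l m) * z₂ t (l m))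
    (hu₂ : ∀ t m, u₂ t (l m) =
      (c₂ (l m))⁻¹ * a₂ (i m) * f₂ (x₂ t) (i m)
        + (c₂ (l m))⁻¹ * b₂ (j m) * g₂ (y₂ t) (j m)
        - h₂ (z₂ t) (l m) + (c₂ (l m))⁻¹ * e₂ t m) :
    ∀ m : Fin n, Tendsto (fun t => e₂ t m) atTop (𝓝 0) := by

  intro m
  -- derivative of e₂ · m is -(e₂ · m)
  have hde : ∀ t, HasDerivAt (fun s => e₂ s m) (-(e₂ t m)) t := by
    intro t
    have h1 : HasDerivAt (fun s => e₂ s m)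
        (a₂ (i m) * f₂ (x₂ t) (i m) + b₂ (j m) * g₂ (y₂ t) (j m)
          - c₂ (l m) * (h₂ (z₂ t) (l m) + u₂ t (l m))) t := by
      have := (((hx₂ t (i m)).const_mul (a₂ (i m))).add
        ((hy₂ t (j m)).const_mul (b₂ (j m)))).sub ((hz₂ t (l m)).const_mul (c₂ (l m)))
      exact this.congr_of_eventuallyEq (by filter_upwards with s using (he₂ s m))
    have heq : a₂ (i m) * f₂ (x₂ t) (i m) + b₂ (j m) * g₂ (y₂ t) (j m)
          - c₂ (l m) * (h₂ (z₂ t) (l m) + u₂ t (l m)) = -(e₂ t m) := by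
      rw [hu₂ t m]
      field_simp [hc₂ (l m)]
      ring
    rwa [heq] at h1
  -- e₂ t m = e₂ 0 m * exp (-t)
  have key : ∀ t, e₂ t m = e₂ 0 m * Real.exp (-t) := by
    have hF : ∀ t, HasDerivAt (fun s => e₂ s m * Real.exp s) 0 t := by
      intro t
      have := (hde t).mul (Real.hasDerivAt_exp t)
      exact this.congr_deriv (by ring)
    have hconst := fun t => hF t
    have : ∀ t, (fun s => e₂ s m * Real.exp s) t = (fun s => e₂ s m * Real.exp s) 0 := by
      intro t
      apply is_const_of_deriv_eq_zero (fun s => (hF s).differentiableAt)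
      intro s; exact (hF s).deriv
    intro t
    have h0 := this t
    simp only [Real.exp_zero, mul_one] at h0
    rw [Real.exp_neg]
    field_simp [Real.exp_ne_zero] at h0 ⊢
    linarith [h0]
  have : Tendsto (fun t => e₂ 0 m * Real.exp (-t)) atTop (𝓝 0) := by
    have := Real.tendsto_exp_neg_atTop_nhds_zero
    simpa using this.const_mul (e₂ 0 m)
  exact this.congr (fun t => (key t).symm)
end

section
/- (Corollary 3(iii)) Suppose a₂ = b₂ = c₂ = d₂ = 0 and c₁ = 0, suppose d₁,ₘ ≠ 0 for all m, and suppose the controller u₃ is chosen as u₃,ₘ(t) = d₁,ₘ⁻¹ a₁,ᵢ₍ₘ₎ f₁,ᵢ₍ₘ₎(x₁(t)) + d₁,ₘ⁻¹ b₁,ⱼ₍ₘ₎ g₁,ⱼ₍ₘ₎(y₁(t)) − k₁,ₘ(w₁(t)) + d₁,ₘ⁻¹ e₁ₘ(t), where e₁ₘ(t) = a₁,ᵢ₍ₘ₎ x₁,ᵢ₍ₘ₎(t) + b₁,ⱼ₍ₘ₎ y₁,ⱼ₍ₘ₎(t) − d₁,ₘ w₁,ₘ(t). Then for every m, e₁ₘ(t)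 → 0 as t → ∞; that is, the drive systems x₁' = f₁(x₁) and y₁' = g₁(y₁) achieve multi-switching combination synchronization with the response system w₁' = k₁(w₁) + u₃. -/
open Filter Topology

/-- Corollary 3(iii): if a₂ = b₂ = c₂ = d₂ = 0, c₁ = 0, d₁ has nonzero entries, and u₃
is chosen as prescribed, then the drive systems x₁' = f₁(x₁), y₁' = g₁(y₁) achieve
multi-switching combination synchronization with w₁' = k₁(w₁) + u₃. -/
theorem multi_switching_combination_sync_w₁
    (n : ℕ) (hn : 1 ≤ n)
    (f₁ g₁ k₁ : (Fin n → ℝ) → (Fin n → ℝ))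
    (x₁ y₁ w₁ u₃ : ℝ → Fin n → ℝ)
    (a₁ b₁ c₁ d₁ a₂ b₂ c₂ d₂ : Fin n → ℝ)
    (i j : Fin n → Fin n)
    (ha₂ : a₂ = 0) (hb₂ : b₂ = 0) (hc₂ : c₂ = 0) (hd₂ : d₂ = 0) (hc₁ : c₁ = 0)
    (hd₁ : ∀ m, d₁ m ≠ 0)
    (hx₁ : ∀ t m, HasDerivAt (fun s => x₁ s m) (f₁ (x₁ t) m) t)
    (hy₁ : ∀ t m, HasDerivAt (fun s => y₁ s m) (g₁ (y₁ t) m) t)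
    (hw₁ : ∀ t m, HasDerivAt (fun s => w₁ s m) (k₁ (w₁ t) m + u₃ t m) t)
    (e₁ : ℝ → Fin n → ℝ)
    (he₁ : ∀ t m, e₁ t m =
      a₁ (i m) * x₁ t (i m) + b₁ (j m) * y₁ t (j m) - d₁ m * w₁ t m)
    (hu₃ : ∀ t m, u₃ t m =
      (d₁ m)⁻¹ * a₁ (i m) * f₁ (x₁ t) (i m) + (d₁ m)⁻¹ * b₁ (j m) * g₁ (y₁ t) (j m)
        - k₁ (w₁ t) m + (d₁ m)⁻¹ * e₁ t m) :
    ∀ m : Fin n, Tendsto (fun t => e₁ t m) atTop (𝓝 0) := by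

  intro m
  -- e₁' = -e₁
  have hde : ∀ t, HasDerivAt (fun s => e₁ s m) (-(e₁ t m)) t := by
    intro t
    have h1 := ((hx₁ t (i m)).const_mul (a₁ (i m))).add ((hy₁ t (j m)).const_mul (b₁ (j m)))
    have h2 := h1.sub ((hw₁ t m).const_mul (d₁ m))
    have : (fun s => a₁ (i m) * x₁ s (i m) + b₁ (j m) * y₁ s (j m) - d₁ m * w₁ s m)
        = fun s => e₁ s m := by funext s; rw [he₁ s m]
    rw [show ((fun y => a₁ (i m) * x₁ y (i m)) + (fun y => b₁ (j m) * y₁ y (j m))) - (fun y => d₁ m * w₁ y m) = fun s => e₁ s m from this] at h2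
    refine h2.congr_deriv ?_
    rw [hu₃ t m]
    field_simp [hd₁ m]
    ring
  -- (e₁ t m) * exp t is constant
  have hconst : ∀ t, e₁ t m * Real.exp t = e₁ 0 m * Real.exp 0 := by
    have hz : ∀ t : ℝ, HasDerivAt (fun s => e₁ s m * Real.exp s) 0 t := by
      intro t
      have := (hde t).mul (Real.hasDerivAt_exp t)
      refine this.congr_deriv ?_
      ring
    intro t
    exact is_const_of_deriv_eq_zero (𝕜 := ℝ)
      (fun s => (hz s).differentiableAt) (fun s => (hz s).deriv) t 0
  have heq : ∀ t, e₁ t m = e₁ 0 m * Real.exp (-t) := by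
    intro t
    have h := hconst t
    rw [Real.exp_zero, mul_one] at h
    rw [Real.exp_neg]
    field_simp [Real.exp_ne_zero t] at h ⊢
    linarith [h]
  have : Tendsto (fun t => e₁ 0 m * Real.exp (-t)) atTop (𝓝 0) := by
    simpa using (Real.tendsto_exp_neg_atTop_nhds_zero.const_mul (e₁ 0 m))
  exact this.congr (fun t => (heq t).symm)
end

section
/- (Corollary 3(iv)) Suppose a₂ = b₂ = c₂ = d₂ = 0 and d₁ = 0, suppose c₁,ₗ ≠ 0 for all l and the switching map l : {1,…,n} → {1,…,n} is a bijection, and suppose the controller u₁ is chosen as u₁,ₗ₍ₘ₎(t) = c₁,ₗ₍ₘ₎⁻¹ a₁,ᵢ₍ₘ₎ f₁,ᵢ₍ₘ₎(x₁(t)) + c₁,ₗ₍ₘ₎⁻¹ b₁,ⱼ₍ₘ₎ g₁,ⱼ₍ₘ₎(y₁(t)) − h₁,ₗ₍ₘ₎(z₁(t)) + c₁,ₗ₍ₘ₎⁻¹ e₁ₘ(t), where e₁ₘ(t) = a₁,ᵢ₍ₘ₎ x₁,ᵢ₍ₘ₎(t) + b₁,ⱼ₍ₘ₎ y₁,ⱼ₍ₘ₎(t)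 − c₁,ₗ₍ₘ₎ z₁,ₗ₍ₘ₎(t). Then for every m, e₁ₘ(t) → 0 as t → ∞; that is, the drive systems x₁' = f₁(x₁) and y₁' = g₁(y₁) achieve multi-switching combination synchronization with the response system z₁' = h₁(z₁) + u₁. -/
open Filter Topology

/-- Corollary 3(iv): if a₂ = b₂ = c₂ = d₂ = 0, d₁ = 0, c₁ has nonzero entries, the
switching map l is a bijection, and u₁ is chosen as prescribed, then the drive systems
x₁' = f₁(x₁), y₁' = g₁(y₁) achieve multi-switching combination synchronization with
z₁' = h₁(z₁) + u₁. -/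
theorem multi_switching_combination_sync_z₁
    (n : ℕ) (hn : 1 ≤ n)
    (f₁ g₁ h₁ : (Fin n → ℝ) → (Fin n → ℝ))
    (x₁ y₁ z₁ u₁ : ℝ → Fin n → ℝ)
    (a₁ b₁ c₁ d₁ a₂ b₂ c₂ d₂ : Fin n → ℝ)
    (i j l : Fin n → Fin n)
    (ha₂ : a₂ = 0) (hb₂ : b₂ = 0) (hc₂ : c₂ = 0) (hd₂ : d₂ = 0) (hd₁ : d₁ = 0)
    (hc₁ : ∀ m, c₁ m ≠ 0)
    (hl : Function.Bijective l)
    (hx₁ : ∀ t m, HasDerivAt (fun s => x₁ s m) (f₁ (x₁ t) m) t)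
    (hy₁ : ∀ t m, HasDerivAt (fun s => y₁ s m) (g₁ (y₁ t) m) t)
    (hz₁ : ∀ t m, HasDerivAt (fun s => z₁ s m) (h₁ (z₁ t) m + u₁ t m) t)
    (e₁ : ℝ → Fin n → ℝ)
    (he₁ : ∀ t m, e₁ t m =
      a₁ (i m) * x₁ t (i m) + b₁ (j m) * y₁ t (j m) - c₁ (l m) * z₁ t (l m))
    (hu₁ : ∀ t m, u₁ t (l m) =
      (c₁ (l m))⁻¹ * a₁ (i m) * f₁ (x₁ t) (i m)
        + (c₁ (l m))⁻¹ * b₁ (j m) * g₁ (y₁ t) (j m)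
        - h₁ (z₁ t) (l m) + (c₁ (l m))⁻¹ * e₁ t m) :
    ∀ m : Fin n, Tendsto (fun t => e₁ t m) atTop (𝓝 0) := by
  intro m
  have key : ∀ t, HasDerivAt (fun s => e₁ s m) (-(e₁ t m)) t := by
    intro t
    have h1 := (((hx₁ t (i m)).const_mul (a₁ (i m))).add
      ((hy₁ t (j m)).const_mul (b₁ (j m)))).sub
      ((hz₁ t (l m)).const_mul (c₁ (l m)))
    have heq : (fun s => a₁ (i m) * x₁ s (i m) + b₁ (j m) * y₁ s (j m)
        - c₁ (l m) * z₁ s (l m)) = fun s => e₁ s m := by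
      funext s; rw [he₁]
    simp only [Pi.add_def, Pi.sub_def] at h1
    rw [heq] at h1
    refine h1.congr_deriv ?_
    rw [hu₁]
    have hc := hc₁ (l m)
    field_simp
    ring
  have hF : ∀ t, HasDerivAt (fun s => e₁ s m * Real.exp s) 0 t := by
    intro t
    have h2 := (key t).mul (Real.hasDerivAt_exp t)
    exact h2.congr_deriv (by ring)
  have hd : Differentiable ℝ (fun s => e₁ s m * Real.exp s) :=
    fun s => (hF s).differentiableAt
  have hconst : ∀ t, e₁ t m * Real.exp t = e₁ 0 m * Real.exp 0 :=
    fun t => is_const_of_deriv_eq_zero hd (fun s => (hF s).deriv) t 0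
  have hrep : ∀ t, e₁ t m = e₁ 0 m * Real.exp (-t) := by
    intro t
    have h3 := hconst t
    have h4 : Real.exp t ≠ 0 := Real.exp_ne_zero t
    rw [Real.exp_zero, mul_one] at h3
    rw [Real.exp_neg]
    field_simp
    linarith [h3]
  have : Tendsto (fun t => e₁ 0 m * Real.exp (-t)) atTop (𝓝 (e₁ 0 m * 0)) :=
    Real.tendsto_exp_neg_atTop_nhds_zero.const_mul _
  rw [mul_zero] at this
  exact this.congr (fun t => (hrep t).symm)
end

section
/- (Genesio–Tesi example) Suppose the aggregate controllers (31) satisfy, for all t: U₁₁ = x₁₃ + y₁₂ − (−6z₁₁ − 2.92z₁₂ − 1.2z₁₃ + z₁₁²) − w₁₂ + e₁₁, U₁₂ = x₁₂ + (−6y₁₁ − 2.92y₁₂ − 1.2y₁₃ + y₁₁²) − z₁₃ − w₁₃ + e₁₂, and U₁₃ = (−6x₁₁ − 2.92x₁₂ − 1.2x₁₃ + x₁₁²) + y₁₃ − z₁₂ − (−6w₁₁ − 2.92w₁₂ − 1.2w₁₃ + w₁₁²) + e₁₃, where U₁₁ = u₁₃ + u₃₁, U₁₂ = u₁₂ + u₃₂,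 U₁₃ = u₁₁ + u₃₃. Then each switched error component satisfies e₁ₘ'(t) = −e₁ₘ(t), so e₁ₘ(t) = e₁ₘ(0)e^{−t} and e₁ₘ(t) → 0 as t → ∞ for m = 1, 2, 3. -/
open Filter Topology

private lemma decay_aux (f : ℝ → ℝ) (hf : ∀ t, HasDerivAt f (-(f t)) t) :
    ∀ t, f t = f 0 * Real.exp (-t) := by
  have hg : ∀ t, HasDerivAt (fun s => f s * Real.exp s) 0 t := by
    intro t
    have : HasDerivAt (fun s => f s * Real.exp s) (-(f t) * Real.exp t + f t * Real.exp t) t :=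
      (hf t).mul (Real.hasDerivAt_exp t)
    convert this using 1
    ring
  have hconst : ∀ t, f t * Real.exp t = f 0 * Real.exp 0 := by
    intro t
    have := is_const_of_deriv_eq_zero (f := fun s => f s * Real.exp s)
      (fun s => (hg s).differentiableAt) (fun s => (hg s).deriv) t 0
    simpa using this
  intro t
  have h := hconst t
  have hexp : Real.exp t ≠ 0 := Real.exp_ne_zero t
  rw [Real.exp_zero, mul_one] at h
  rw [Real.exp_neg]
  field_simp
  linarith [h]

private lemma tendsto_aux (f : ℝ → ℝ) (h : ∀ t, f t = f 0 * Real.exp (-t)) :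
    Tendsto f atTop (𝓝 0) := by
  have : Tendsto (fun t => f 0 * Real.exp (-t)) atTop (𝓝 (f 0 * 0)) :=
    Real.tendsto_exp_neg_atTop_nhds_zero.const_mul _
  rw [mul_zero] at this
  exact this.congr (fun t => (h t).symm)

/-- Genesio–Tesi example: with the aggregate controllers (31), each switched error
component satisfies e' = -e, hence e(t) = e(0)·exp(-t) and e(t) → 0 as t → ∞. -/
theorem genesio_tesi_dual_combination_combination_multi_switching
    (x₁₁ x₁₂ x₁₃ y₁₁ y₁₂ y₁₃ z₁₁ z₁₂ z₁₃ w₁₁ w₁₂ w₁₃ : ℝ → ℝ)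
    (u₁₁ u₁₂ u₁₃ u₃₁ u₃₂ u₃₃ : ℝ → ℝ)
    -- drive system (23)
    (hx₁ : ∀ t, HasDerivAt x₁₁ (x₁₂ t) t)
    (hx₂ : ∀ t, HasDerivAt x₁₂ (x₁₃ t) t)
    (hx₃ : ∀ t, HasDerivAt x₁₃
      (-6 * x₁₁ t - 2.92 * x₁₂ t - 1.2 * x₁₃ t + (x₁₁ t) ^ 2) t)
    -- drive system (25)
    (hy₁ : ∀ t, HasDerivAt y₁₁ (y₁₂ t) t)
    (hy₂ : ∀ t, HasDerivAt y₁₂ (y₁₃ t) t)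
    (hy₃ : ∀ t, HasDerivAt y₁₃
      (-6 * y₁₁ t - 2.92 * y₁₂ t - 1.2 * y₁₃ t + (y₁₁ t) ^ 2) t)
    -- response system (27)
    (hz₁ : ∀ t, HasDerivAt z₁₁ (z₁₂ t + u₁₁ t) t)
    (hz₂ : ∀ t, HasDerivAt z₁₂ (z₁₃ t + u₁₂ t) t)
    (hz₃ : ∀ t, HasDerivAt z₁₃
      (-6 * z₁₁ t - 2.92 * z₁₂ t - 1.2 * z₁₃ t + (z₁₁ t) ^ 2 + u₁₃ t) t)
    -- response system (29)
    (hw₁ : ∀ t, HasDerivAt w₁₁ (w₁₂ t + u₃₁ t) t)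
    (hw₂ : ∀ t, HasDerivAt w₁₂ (w₁₃ t + u₃₂ t) t)
    (hw₃ : ∀ t, HasDerivAt w₁₃
      (-6 * w₁₁ t - 2.92 * w₁₂ t - 1.2 * w₁₃ t + (w₁₁ t) ^ 2 + u₃₃ t) t)
    -- multi-switched error components
    (e₁₁ e₁₂ e₁₃ : ℝ → ℝ)
    (he₁₁ : ∀ t, e₁₁ t = x₁₂ t + y₁₁ t - z₁₃ t - w₁₁ t)
    (he₁₂ : ∀ t, e₁₂ t = x₁₁ t + y₁₃ t - z₁₂ t - w₁₂ t)
    (he₁₃ : ∀ t, e₁₃ t = x₁₃ t + y₁₂ t - z₁₁ t - w₁₃ t)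
    -- aggregate controllers (31)
    (hU₁₁ : ∀ t, u₁₃ t + u₃₁ t =
      x₁₃ t + y₁₂ t
        - (-6 * z₁₁ t - 2.92 * z₁₂ t - 1.2 * z₁₃ t + (z₁₁ t) ^ 2)
        - w₁₂ t + e₁₁ t)
    (hU₁₂ : ∀ t, u₁₂ t + u₃₂ t =
      x₁₂ t + (-6 * y₁₁ t - 2.92 * y₁₂ t - 1.2 * y₁₃ t + (y₁₁ t) ^ 2)
        - z₁₃ t - w₁₃ t + e₁₂ t)
    (hU₁₃ : ∀ t, u₁₁ t + u₃₃ t =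
      (-6 * x₁₁ t - 2.92 * x₁₂ t - 1.2 * x₁₃ t + (x₁₁ t) ^ 2) + y₁₃ t - z₁₂ t
        - (-6 * w₁₁ t - 2.92 * w₁₂ t - 1.2 * w₁₃ t + (w₁₁ t) ^ 2) + e₁₃ t) :
    (∀ t, HasDerivAt e₁₁ (-(e₁₁ t)) t) ∧ (∀ t, HasDerivAt e₁₂ (-(e₁₂ t)) t) ∧
    (∀ t, HasDerivAt e₁₃ (-(e₁₃ t)) t) ∧
    (∀ t, e₁₁ t = e₁₁ 0 * Real.exp (-t)) ∧
    (∀ t, e₁₂ t = e₁₂ 0 * Real.exp (-t)) ∧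
    (∀ t, e₁₃ t = e₁₃ 0 * Real.exp (-t)) ∧
    Tendsto e₁₁ atTop (𝓝 0) ∧ Tendsto e₁₂ atTop (𝓝 0) ∧
    Tendsto e₁₃ atTop (𝓝 0) := by
  have hf₁ : e₁₁ = fun t => x₁₂ t + y₁₁ t - z₁₃ t - w₁₁ t := funext he₁₁
  have hf₂ : e₁₂ = fun t => x₁₁ t + y₁₃ t - z₁₂ t - w₁₂ t := funext he₁₂
  have hf₃ : e₁₃ = fun t => x₁₃ t + y₁₂ t - z₁₁ t - w₁₃ t := funext he₁₃
  have hd₁ : ∀ t, HasDerivAt e₁₁ (-(e₁₁ t)) t := by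
    intro t
    have h := (((hx₂ t).add (hy₁ t)).sub (hz₃ t)).sub (hw₁ t)
    rw [show x₁₂ + y₁₁ - z₁₃ - w₁₁ = e₁₁ from hf₁.symm] at h
    refine h.congr_deriv ?_
    have := hU₁₁ t
    rw [he₁₁ t] at this ⊢
    nlinarith [this]
  have hd₂ : ∀ t, HasDerivAt e₁₂ (-(e₁₂ t)) t := by
    intro t
    have h := (((hx₁ t).add (hy₃ t)).sub (hz₂ t)).sub (hw₂ t)
    rw [show x₁₁ + y₁₃ - z₁₂ - w₁₂ = e₁₂ from hf₂.symm] at h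
    refine h.congr_deriv ?_
    have := hU₁₂ t
    rw [he₁₂ t] at this ⊢
    nlinarith [this]
  have hd₃ : ∀ t, HasDerivAt e₁₃ (-(e₁₃ t)) t := by
    intro t
    have h := (((hx₃ t).add (hy₂ t)).sub (hz₁ t)).sub (hw₃ t)
    rw [show x₁₃ + y₁₂ - z₁₁ - w₁₃ = e₁₃ from hf₃.symm] at h
    refine h.congr_deriv ?_
    have := hU₁₃ t
    rw [he₁₃ t] at this ⊢
    nlinarith [this]
  have hs₁ := decay_aux e₁₁ hd₁
  have hs₂ := decay_aux e₁₂ hd₂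
  have hs₃ := decay_aux e₁₃ hd₃
  exact ⟨hd₁, hd₂, hd₃, hs₁, hs₂, hs₃,
    tendsto_aux e₁₁ hs₁, tendsto_aux e₁₂ hs₂, tendsto_aux e₁₃ hs₃⟩
end

section
/- (Lu example) Suppose the aggregate controllers (32) satisfy, for all t: U₂₁ = x₂₁x₂₂ − 3x₂₃ + (−y₂₁y₂₃ + 20y₂₂) − (−z₂₁z₂₃ + 20z₂₂) − 36(w₂₂ − w₂₁) + e₂₁, U₂₂ = 36(x₂₂ − x₂₁) + (y₂₁y₂₂ − 3y₂₃) − (z₂₁z₂₂ − 3z₂₃) − (−w₂₁w₂₃ + 20w₂₂) + e₂₂, and U₂₃ = (−x₂₁x₂₃ + 20x₂₂) + 36(y₂₂ − y₂₁) − 36(z₂₂ − z₂₁) − (w₂₁w₂₂ − 3w₂₃) + e₂₃, where U₂₁ = u₂₂ + u₄₁, U₂₂ = u₂₃ + u₄₂, U₂₃ = u₂₁ + u₄₃. Then each switched error component satisfies e₂ₘ'(t) = −e₂ₘ(t), so e₂ₘ(t) = e₂ₘ(0)e^{−t} and e₂ₘ(t) → 0 as t → ∞ for m = 1, 2, 3.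 -/
open Filter Topology


private lemma decay_sol (e : ℝ → ℝ) (h : ∀ t, HasDerivAt e (-(e t)) t) :
    ∀ t, e t = e 0 * Real.exp (-t) := by
  have hconst : ∀ t : ℝ, e t * Real.exp t = e 0 * Real.exp 0 := by
    have hd : ∀ t : ℝ, HasDerivAt (fun t => e t * Real.exp t) 0 t := by
      intro t
      have := (h t).mul (Real.hasDerivAt_exp t)
      refine this.congr_deriv ?_
      ring
    intro t
    exact is_const_of_deriv_eq_zero (fun x => (hd x).differentiableAt)
      (fun x => (hd x).deriv) t 0
  intro t
  have := hconst t
  have hexp : Real.exp t ≠ 0 := Real.exp_ne_zero t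
  field_simp [Real.exp_neg] at this ⊢
  rw [Real.exp_zero, mul_one] at this
  rw [Real.exp_neg, eq_mul_inv_iff_mul_eq₀ hexp]
  exact this

private lemma decay_tendsto (e : ℝ → ℝ) (h : ∀ t, e t = e 0 * Real.exp (-t)) :
    Filter.Tendsto e Filter.atTop (nhds 0) := by
  have : Filter.Tendsto (fun t : ℝ => e 0 * Real.exp (-t)) Filter.atTop (nhds (e 0 * 0)) :=
    (Real.tendsto_exp_atBot.comp tendsto_neg_atTop_atBot).const_mul _
  rw [show e = fun t => e 0 * Real.exp (-t) from funext h]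
  simpa using this

/-- Lu example: with the aggregate controllers (32), each switched error component
satisfies e' = -e, hence e(t) = e(0)·exp(-t) and e(t) → 0 as t → ∞. -/
theorem lu_dual_combination_combination_multi_switching
    (x₂₁ x₂₂ x₂₃ y₂₁ y₂₂ y₂₃ z₂₁ z₂₂ z₂₃ w₂₁ w₂₂ w₂₃ : ℝ → ℝ)
    (u₂₁ u₂₂ u₂₃ u₄₁ u₄₂ u₄₃ : ℝ → ℝ)
    -- drive system (24)
    (hx₁ : ∀ t, HasDerivAt x₂₁ (36 * (x₂₂ t - x₂₁ t)) t)
    (hx₂ : ∀ t, HasDerivAt x₂₂ (-(x₂₁ t) * x₂₃ t + 20 * x₂₂ t) t)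
    (hx₃ : ∀ t, HasDerivAt x₂₃ (x₂₁ t * x₂₂ t - 3 * x₂₃ t) t)
    -- drive system (26)
    (hy₁ : ∀ t, HasDerivAt y₂₁ (36 * (y₂₂ t - y₂₁ t)) t)
    (hy₂ : ∀ t, HasDerivAt y₂₂ (-(y₂₁ t) * y₂₃ t + 20 * y₂₂ t) t)
    (hy₃ : ∀ t, HasDerivAt y₂₃ (y₂₁ t * y₂₂ t - 3 * y₂₃ t) t)
    -- response system (28)
    (hz₁ : ∀ t, HasDerivAt z₂₁ (36 * (z₂₂ t - z₂₁ t) + u₂₁ t) t)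
    (hz₂ : ∀ t, HasDerivAt z₂₂ (-(z₂₁ t) * z₂₃ t + 20 * z₂₂ t + u₂₂ t) t)
    (hz₃ : ∀ t, HasDerivAt z₂₃ (z₂₁ t * z₂₂ t - 3 * z₂₃ t + u₂₃ t) t)
    -- response system (30)
    (hw₁ : ∀ t, HasDerivAt w₂₁ (36 * (w₂₂ t - w₂₁ t) + u₄₁ t) t)
    (hw₂ : ∀ t, HasDerivAt w₂₂ (-(w₂₁ t) * w₂₃ t + 20 * w₂₂ t + u₄₂ t) t)
    (hw₃ : ∀ t, HasDerivAt w₂₃ (w₂₁ t * w₂₂ t - 3 * w₂₃ t + u₄₃ t) t)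
    -- multi-switched error components
    (e₂₁ e₂₂ e₂₃ : ℝ → ℝ)
    (he₂₁ : ∀ t, e₂₁ t = x₂₃ t + y₂₂ t - z₂₂ t - w₂₁ t)
    (he₂₂ : ∀ t, e₂₂ t = x₂₁ t + y₂₃ t - z₂₃ t - w₂₂ t)
    (he₂₃ : ∀ t, e₂₃ t = x₂₂ t + y₂₁ t - z₂₁ t - w₂₃ t)
    -- aggregate controllers (32)
    (hU₂₁ : ∀ t, u₂₂ t + u₄₁ t =
      x₂₁ t * x₂₂ t - 3 * x₂₃ t + (-(y₂₁ t) * y₂₃ t + 20 * y₂₂ t)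
        - (-(z₂₁ t) * z₂₃ t + 20 * z₂₂ t) - 36 * (w₂₂ t - w₂₁ t) + e₂₁ t)
    (hU₂₂ : ∀ t, u₂₃ t + u₄₂ t =
      36 * (x₂₂ t - x₂₁ t) + (y₂₁ t * y₂₂ t - 3 * y₂₃ t)
        - (z₂₁ t * z₂₂ t - 3 * z₂₃ t) - (-(w₂₁ t) * w₂₃ t + 20 * w₂₂ t) + e₂₂ t)
    (hU₂₃ : ∀ t, u₂₁ t + u₄₃ t =
      (-(x₂₁ t) * x₂₃ t + 20 * x₂₂ t) + 36 * (y₂₂ t - y₂₁ t)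
        - 36 * (z₂₂ t - z₂₁ t) - (w₂₁ t * w₂₂ t - 3 * w₂₃ t) + e₂₃ t) :
    (∀ t, HasDerivAt e₂₁ (-(e₂₁ t)) t) ∧ (∀ t, HasDerivAt e₂₂ (-(e₂₂ t)) t) ∧
    (∀ t, HasDerivAt e₂₃ (-(e₂₃ t)) t) ∧
    (∀ t, e₂₁ t = e₂₁ 0 * Real.exp (-t)) ∧
    (∀ t, e₂₂ t = e₂₂ 0 * Real.exp (-t)) ∧
    (∀ t, e₂₃ t = e₂₃ 0 * Real.exp (-t)) ∧
    Tendsto e₂₁ atTop (𝓝 0) ∧ Tendsto e₂₂ atTop (𝓝 0) ∧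
    Tendsto e₂₃ atTop (𝓝 0) := by

  have d1 : ∀ t, HasDerivAt e₂₁ (-(e₂₁ t)) t := by
    intro t
    have h := (((hx₃ t).add (hy₂ t)).sub (hz₂ t)).sub (hw₁ t)
    have heq : e₂₁ = fun t => x₂₃ t + y₂₂ t - z₂₂ t - w₂₁ t := funext he₂₁
    rw [heq]
    refine h.congr_deriv ?_
    have := hU₂₁ t
    rw [he₂₁ t] at this
    ring_nf
    ring_nf at this
    linarith
  have d2 : ∀ t, HasDerivAt e₂₂ (-(e₂₂ t)) t := by
    intro t
    have h := (((hx₁ t).add (hy₃ t)).sub (hz₃ t)).sub (hw₂ t)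
    have heq : e₂₂ = fun t => x₂₁ t + y₂₃ t - z₂₃ t - w₂₂ t := funext he₂₂
    rw [heq]
    refine h.congr_deriv ?_
    have := hU₂₂ t
    rw [he₂₂ t] at this
    ring_nf
    ring_nf at this
    linarith
  have d3 : ∀ t, HasDerivAt e₂₃ (-(e₂₃ t)) t := by
    intro t
    have h := (((hx₂ t).add (hy₁ t)).sub (hz₁ t)).sub (hw₃ t)
    have heq : e₂₃ = fun t => x₂₂ t + y₂₁ t - z₂₁ t - w₂₃ t := funext he₂₃
    rw [heq]
    refine h.congr_deriv ?_
    have := hU₂₃ t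
    rw [he₂₃ t] at this
    ring_nf
    ring_nf at this
    linarith
  have s1 := decay_sol e₂₁ d1
  have s2 := decay_sol e₂₂ d2
  have s3 := decay_sol e₂₃ d3
  exact ⟨d1, d2, d3, s1, s2, s3, decay_tendsto _ s1, decay_tendsto _ s2, decay_tendsto _ s3⟩
end
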